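/- If for some m₀ the mode of I(L_{m₀,n};t) equals λ_n + 1, then for all m ≥ m₀ the mode of I(L_{m,n};t) equals λ_n + 1. -/
import Mathlib


open Polynomial

open Classical in
/-- The independence polynomial of a finite simple graph. -/
noncomputable def indepPoly {V : Type} [Fintype V] (G : SimpleGraph V) : Polynomial ℕ :=
  ∑ s : Finset V, if (∀ i ∈ s, ∀ j ∈ s, ¬ G.Adj i j) then (X : Polynomial ℕ) ^ s.card else 0

/-- The lollipop graph `L_{m,n}`: a complete graph `K_m` joined to a path `P_n` by a
bridge between vertex `m-1` of `K_m` and the endpoint `0` of the path. -/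
def lollipop (m n : ℕ) : SimpleGraph (Fin m ⊕ Fin n) :=
  SimpleGraph.fromRel (fun x y =>
    match x, y with
    | Sum.inl _, Sum.inl _ => True
    | Sum.inr i, Sum.inr j => (j : ℕ) = (i : ℕ) + 1
    | Sum.inl i, Sum.inr j => (i : ℕ) = m - 1 ∧ (j : ℕ) = 0
    | Sum.inr _, Sum.inl _ => False)

/-- `i` is the mode of the coefficient sequence of `p`:
`a_{i-1} < a_i ≥ a_{i+1} ≥ ⋯` (with the convention `a₋₁ = 0`). -/
def PolyIsMode (p : Polynomial ℕ) (i : ℕ) : Prop :=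
  (i = 0 → 0 < p.coeff 0) ∧ (∀ k, i = k + 1 → p.coeff k < p.coeff (k + 1)) ∧
    (∀ j, i ≤ j → p.coeff (j + 1) ≤ p.coeff j)

/-! ### Auxiliary lemmas -/

section Aux

lemma my_if_congr {α : Sort*} {p q : Prop} {h1 : Decidable p} {h2 : Decidable q} (h : p ↔ q)
    {x u y v : α} (hx : x = u) (hy : y = v) :
    (@ite _ p h1 x y) = (@ite _ q h2 u v) := by
  cases propext h
  cases Subsingleton.elim h1 h2
  cases hx
  cases hy
  rfl

lemma aux_sum_disjSum {α β : Type} [Fintype α] [Fintype β] {M : Type*} [AddCommMonoid M]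
    (f : Finset (α ⊕ β) → M) :
    ∑ s : Finset (α ⊕ β), f s = ∑ a : Finset α, ∑ b : Finset β, f (a.disjSum b) := by
  have h := Fintype.sum_bijective (fun p : Finset α × Finset β => p.1.disjSum p.2)
    ⟨fun p q h => by
        obtain ⟨h1, h2⟩ := Finset.disjSum_inj.mp h
        exact Prod.ext h1 h2,
     fun s => ⟨(s.toLeft, s.toRight), Finset.toLeft_disjSum_toRight⟩⟩
    (fun p : Finset α × Finset β => f (p.1.disjSum p.2)) f (fun p => rfl)
  rw [← h, Fintype.sum_prod_type]

lemma aux_sum_card_le_one {α : Type} [Fintype α] [DecidableEq α] {M : Type*} [AddCommMonoid M]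
    (g : Finset α → M) (hg : ∀ a : Finset α, 2 ≤ a.card → g a = 0) :
    ∑ a : Finset α, g a = g ∅ + ∑ i : α, g {i} := by
  classical
  have h1 : ∑ a ∈ insert (∅ : Finset α) (Finset.univ.image fun i : α => ({i} : Finset α)),
      g a = ∑ a : Finset α, g a := by
    apply Finset.sum_subset (Finset.subset_univ _)
    intro a _ ha
    apply hg
    by_contra h
    push_neg at h
    have hc : a.card = 0 ∨ a.card = 1 := by omega
    rcases hc with hc | hc
    · exact ha (by simp [Finset.card_eq_zero.mp hc])
    · obtain ⟨i, rfl⟩ := Finset.card_eq_one.mp hc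
      exact ha (by simp)
  rw [← h1, Finset.sum_insert (by simp only [Finset.mem_image]; rintro ⟨x, -, hx⟩; exact Finset.singleton_ne_empty x hx), Finset.sum_image
    (fun x _ y _ h => Finset.singleton_injective h)]

lemma lollipop_adj_inl_inl {M n : ℕ} (i j : Fin M) :
    (lollipop M n).Adj (Sum.inl i) (Sum.inl j) ↔ i ≠ j := by
  simp [lollipop, SimpleGraph.fromRel_adj]

lemma lollipop_adj_inr_inr {M n : ℕ} (i j : Fin n) :
    (lollipop M n).Adj (Sum.inr i) (Sum.inr j) ↔ (SimpleGraph.pathGraph n).Adj i j := by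
  simp only [lollipop, SimpleGraph.fromRel_adj, SimpleGraph.pathGraph_adj, ne_eq,
    Sum.inr.injEq]
  constructor
  · rintro ⟨hne, h | h⟩ <;> omega
  · intro h
    have hne : ¬ i = j := by
      intro he; subst he; omega
    refine ⟨by simpa using hne, by omega⟩

lemma lollipop_adj_inl_inr {M n : ℕ} (i : Fin M) (j : Fin n) :
    (lollipop M n).Adj (Sum.inl i) (Sum.inr j) ↔ ((i : ℕ) = M - 1 ∧ (j : ℕ) = 0) := by
  simp [lollipop, SimpleGraph.fromRel_adj]

lemma lollipop_cond_iff {M n : ℕ} (a : Finset (Fin M)) (b : Finset (Fin n)) :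
    (∀ i ∈ a.disjSum b, ∀ j ∈ a.disjSum b, ¬ (lollipop M n).Adj i j) ↔
      ((∀ i ∈ a, ∀ j ∈ a, i = j) ∧
        (∀ i ∈ b, ∀ j ∈ b, ¬ (SimpleGraph.pathGraph n).Adj i j) ∧
        (∀ i ∈ a, ∀ j ∈ b, ¬ ((i : ℕ) = M - 1 ∧ (j : ℕ) = 0))) := by
  constructor
  · intro H
    refine ⟨fun i hi j hj => ?_, fun i hi j hj hadj => ?_, fun i hi j hj hc => ?_⟩
    · by_contra hne
      exact H _ (Finset.inl_mem_disjSum.2 hi) _ (Finset.inl_mem_disjSum.2 hj)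
        ((lollipop_adj_inl_inl i j).2 hne)
    · exact H _ (Finset.inr_mem_disjSum.2 hi) _ (Finset.inr_mem_disjSum.2 hj)
        ((lollipop_adj_inr_inr i j).2 hadj)
    · exact H _ (Finset.inl_mem_disjSum.2 hi) _ (Finset.inr_mem_disjSum.2 hj)
        ((lollipop_adj_inl_inr i j).2 hc)
  · rintro ⟨h1, h2, h3⟩ x hx y hy hadj
    rw [Finset.mem_disjSum] at hx hy
    rcases hx with ⟨i, hi, rfl⟩ | ⟨i, hi, rfl⟩ <;> rcases hy with ⟨j, hj, rfl⟩ | ⟨j, hj, rfl⟩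
    · exact ((lollipop_adj_inl_inl i j).1 hadj) (h1 i hi j hj)
    · exact h3 i hi j hj ((lollipop_adj_inl_inr i j).1 hadj)
    · exact h3 j hj i hi ((lollipop_adj_inl_inr j i).1 hadj.symm)
    · exact h2 i hi j hj ((lollipop_adj_inr_inr i j).1 hadj)

open Classical in
/-- The generating polynomial of independent sets of the path avoiding the endpoint `0`,
shifted by one (i.e. together with the bridge vertex of the clique). -/
noncomputable def pathAvoidPoly (n : ℕ) : Polynomial ℕ :=
  ∑ b : Finset (Fin n),
    if (∀ i ∈ b, ∀ j ∈ b, ¬ (SimpleGraph.pathGraph n).Adj i j) ∧ (∀ j ∈ b, (j : ℕ) ≠ 0) then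
      (X : Polynomial ℕ) ^ (b.card + 1) else 0

open Classical in
lemma X_mul_indepPoly_path (n : ℕ) :
    X * indepPoly (SimpleGraph.pathGraph n) =
      ∑ b : Finset (Fin n),
        if (∀ i ∈ b, ∀ j ∈ b, ¬ (SimpleGraph.pathGraph n).Adj i j) then
          (X : Polynomial ℕ) ^ (b.card + 1) else 0 := by
  unfold indepPoly
  rw [Finset.mul_sum]
  refine Finset.sum_congr rfl fun b _ => ?_
  rw [mul_ite, mul_zero, ← pow_succ']
  exact my_if_congr Iff.rfl rfl rfl

/-- Closed form for the independence polynomial of the lollipop graph. -/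
lemma lollipop_closed (n M : ℕ) (hM : 1 ≤ M) :
    indepPoly (lollipop M n) =
      indepPoly (SimpleGraph.pathGraph n) + pathAvoidPoly n +
        (M - 1) • (X * indepPoly (SimpleGraph.pathGraph n)) := by
  classical
  have e1 : indepPoly (lollipop M n) =
      ∑ a : Finset (Fin M), ∑ b : Finset (Fin n),
        if (∀ i ∈ a.disjSum b, ∀ j ∈ a.disjSum b, ¬ (lollipop M n).Adj i j) then
          (X : Polynomial ℕ) ^ (a.disjSum b).card else 0 := by
    have e0 : indepPoly (lollipop M n) =
        ∑ s : Finset (Fin M ⊕ Fin n),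
          if (∀ i ∈ s, ∀ j ∈ s, ¬ (lollipop M n).Adj i j) then
            (X : Polynomial ℕ) ^ s.card else 0 := by
      unfold indepPoly
      exact Finset.sum_congr rfl fun s _ => my_if_congr Iff.rfl rfl rfl
    rw [e0, aux_sum_disjSum (fun s : Finset (Fin M ⊕ Fin n) =>
      if (∀ i ∈ s, ∀ j ∈ s, ¬ (lollipop M n).Adj i j) then (X : Polynomial ℕ) ^ s.card else 0)]
  have hg : ∀ a : Finset (Fin M), 2 ≤ a.card →
      (∑ b : Finset (Fin n),
        if (∀ i ∈ a.disjSum b, ∀ j ∈ a.disjSum b, ¬ (lollipop M n).Adj i j) then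
          (X : Polynomial ℕ) ^ (a.disjSum b).card else 0) = 0 := by
    intro a ha
    obtain ⟨i, hi, j, hj, hij⟩ := Finset.one_lt_card.mp ha
    refine Finset.sum_eq_zero fun b _ => ?_
    rw [if_neg]
    intro H
    exact H _ (Finset.inl_mem_disjSum.2 hi) _ (Finset.inl_mem_disjSum.2 hj)
      ((lollipop_adj_inl_inl i j).2 hij)
  have hG := aux_sum_card_le_one (fun a : Finset (Fin M) =>
      ∑ b : Finset (Fin n),
        if (∀ i ∈ a.disjSum b, ∀ j ∈ a.disjSum b, ¬ (lollipop M n).Adj i j) then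
          (X : Polynomial ℕ) ^ (a.disjSum b).card else 0) hg
  rw [e1, hG]
  have h_empty : (∑ b : Finset (Fin n),
      if (∀ i ∈ (∅ : Finset (Fin M)).disjSum b, ∀ j ∈ (∅ : Finset (Fin M)).disjSum b,
          ¬ (lollipop M n).Adj i j) then
        (X : Polynomial ℕ) ^ ((∅ : Finset (Fin M)).disjSum b).card else 0) =
      indepPoly (SimpleGraph.pathGraph n) := by
    unfold indepPoly
    refine Finset.sum_congr rfl fun b _ => ?_
    refine my_if_congr ?_ (by simp) rfl
    rw [lollipop_cond_iff]
    simp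
  set i₀ : Fin M := ⟨M - 1, by omega⟩ with hi₀_def
  have h_bridge : (∑ b : Finset (Fin n),
      if (∀ i ∈ ({i₀} : Finset (Fin M)).disjSum b, ∀ j ∈ ({i₀} : Finset (Fin M)).disjSum b,
          ¬ (lollipop M n).Adj i j) then
        (X : Polynomial ℕ) ^ (({i₀} : Finset (Fin M)).disjSum b).card else 0) =
      pathAvoidPoly n := by
    unfold pathAvoidPoly
    refine Finset.sum_congr rfl fun b _ => ?_
    refine my_if_congr ?_ (by simp [add_comm]) rfl
    rw [lollipop_cond_iff]
    constructor
    · rintro ⟨-, h2, h3⟩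
      exact ⟨h2, fun j hj hj0 => h3 i₀ (Finset.mem_singleton_self i₀) j hj ⟨rfl, hj0⟩⟩
    · rintro ⟨h2, h3⟩
      refine ⟨by simp, h2, ?_⟩
      rintro i hi j hj ⟨-, hj0⟩
      exact h3 j hj hj0
  have h_single : ∀ i : Fin M, i ≠ i₀ → (∑ b : Finset (Fin n),
      if (∀ i' ∈ ({i} : Finset (Fin M)).disjSum b, ∀ j ∈ ({i} : Finset (Fin M)).disjSum b,
          ¬ (lollipop M n).Adj i' j) then
        (X : Polynomial ℕ) ^ (({i} : Finset (Fin M)).disjSum b).card else 0) =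
      X * indepPoly (SimpleGraph.pathGraph n) := by
    intro i hi
    rw [X_mul_indepPoly_path]
    refine Finset.sum_congr rfl fun b _ => ?_
    refine my_if_congr ?_ (by simp [add_comm]) rfl
    rw [lollipop_cond_iff]
    have hval : (i : ℕ) ≠ M - 1 := by
      intro h
      exact hi (Fin.ext h)
    constructor
    · rintro ⟨-, h2, -⟩
      exact h2
    · intro h2
      refine ⟨by simp, h2, ?_⟩
      rintro i' hi' j hj ⟨hi'v, -⟩
      rw [Finset.mem_singleton] at hi'
      subst hi'
      exact hval hi'v
  rw [h_empty, ← Finset.add_sum_erase _ _ (Finset.mem_univ i₀), h_bridge]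
  have hsum : (∑ i ∈ Finset.univ.erase i₀, ∑ b : Finset (Fin n),
      if (∀ i' ∈ ({i} : Finset (Fin M)).disjSum b, ∀ j ∈ ({i} : Finset (Fin M)).disjSum b,
          ¬ (lollipop M n).Adj i' j) then
        (X : Polynomial ℕ) ^ (({i} : Finset (Fin M)).disjSum b).card else 0) =
      (M - 1) • (X * indepPoly (SimpleGraph.pathGraph n)) := by
    rw [Finset.sum_congr rfl fun i hi => h_single i (Finset.ne_of_mem_erase hi)]
    rw [Finset.sum_const, Finset.card_erase_of_mem (Finset.mem_univ i₀), Finset.card_univ,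
      Fintype.card_fin]
  rw [hsum, add_assoc]

lemma lollipop_rec (n m : ℕ) (hm : 1 ≤ m) :
    indepPoly (lollipop (m + 1) n) =
      indepPoly (lollipop m n) + X * indepPoly (SimpleGraph.pathGraph n) := by
  rw [lollipop_closed n (m + 1) (by omega), lollipop_closed n m hm]
  have h : m + 1 - 1 = (m - 1) + 1 := by omega
  rw [h, succ_nsmul]
  ring_nf

lemma polyIsMode_X_mul {p : Polynomial ℕ} {l : ℕ} (h : PolyIsMode p l) :
    PolyIsMode (X * p) (l + 1) := by
  obtain ⟨h0, h1, h2⟩ := h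
  refine ⟨fun h => by omega, fun k hk => ?_, fun j hj => ?_⟩
  · have hk' : l = k := by omega
    subst hk'
    rcases Nat.eq_zero_or_pos l with rfl | hl
    · rw [coeff_X_mul]
      have : (X * p).coeff 0 = 0 := by
        rw [mul_coeff_zero, coeff_X_zero, zero_mul]
      rw [this]
      exact h0 rfl
    · obtain ⟨k', rfl⟩ : ∃ k', l = k' + 1 := ⟨l - 1, by omega⟩
      rw [coeff_X_mul, coeff_X_mul]
      exact h1 k' rfl
  · obtain ⟨j', rfl⟩ : ∃ j', j = j' + 1 := ⟨j - 1, by omega⟩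
    rw [coeff_X_mul, coeff_X_mul]
    exact h2 j' (by omega)

lemma polyIsMode_add {p q : Polynomial ℕ} {i : ℕ} (hp : PolyIsMode p i) (hq : PolyIsMode q i) :
    PolyIsMode (p + q) i := by
  obtain ⟨p0, p1, p2⟩ := hp
  obtain ⟨q0, q1, q2⟩ := hq
  refine ⟨fun h => ?_, fun k hk => ?_, fun j hj => ?_⟩ <;> simp only [coeff_add]
  · have := p0 h
    omega
  · exact add_lt_add (p1 k hk) (q1 k hk)
  · exact add_le_add (p2 j hj) (q2 j hj)

end Aux

/-- If for some `m₀` the mode of `I(L_{m₀,n};t)` equals `λ_n + 1`, then for all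
`m ≥ m₀` the mode of `I(L_{m,n};t)` equals `λ_n + 1`. -/
theorem lollipop_mode_stabilizes (n : ℕ) (hn : 1 ≤ n) (m₀ : ℕ) (hm₀ : 1 ≤ m₀) (l : ℕ)
    (hl : PolyIsMode (indepPoly (SimpleGraph.pathGraph n)) l)
    (hmode : PolyIsMode (indepPoly (lollipop m₀ n)) (l + 1)) :
    ∀ m, m₀ ≤ m → PolyIsMode (indepPoly (lollipop m n)) (l + 1) := by
  intro m hm
  induction m, hm using Nat.le_induction with
  | base => exact hmode
  | succ m hm ih =>
    rw [lollipop_rec n m (le_trans hm₀ hm)]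
    exact polyIsMode_add ih (polyIsMode_X_mul hl)
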